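/- (Theorem 2, transmit side: the two-layer optimal beamformer is fixed by the high-SNR max-SINR update in the reciprocal channel.) Let M = 2d and let H_{kl} ∈ ℂ^{M×M}. Let V̲_k, U̲_k ∈ ℂ^{M×d} have orthonormal columns and satisfy U̲_k^H H_{kl} V̲_l = 0 for all l ≠ k. For each k let the equivalent channel H̄_k = U̲_k^H H_{kk} V̲_k have singular value decomposition H̄_k = Θ_k Λ_k Φ_k^H with Θ_k, Φ_k unitary and all singular values strictly positive, and set U*_k = U̲_k Θ_k = [u*_k^{(1)},…,u*_k^{(d)}] and v*_k^{(m)} = V̲_k φ_k^{(m)}, where φ_k^{(m)} is the m-th column of Φ_k. Fix l, set Z̄*_l = Σ_{k≠l} H_{kl}^H U*_k U*_k{}^H H_{kl} and assume rank(Z̄*_l) = d. For each m set W̄*_{l,m} = Z̄*_l + Σ_{j≠m} H_{ll}^H u*_l^{(j)} u*_l^{(j)H} H_{ll}. Then ker(W̄*_{l,m}) = span{v*_l^{(m)}}, and the normalized vector (I + t W̄*_{l,m})^{-1} H_{ll}^H u*_l^{(m)} / ‖(I + t W̄*_{l,m})^{-1} H_{ll}^H u*_l^{(m)}‖ converges,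 as t → ∞, exactly to v*_l^{(m)}. -/

import Mathlib

open Matrix Filter
open scoped ComplexOrder

noncomputable def euclNorm {M : ℕ} (v : Fin M → ℂ) : ℝ :=
  Real.sqrt (∑ i, ‖v i‖ ^ 2)

/-!
Interference alignment puts the column space of `V̲_l` inside `ker Z̄*_l`, and the rank
hypothesis makes the two equal. On `V̲_l c` the rank-one terms of `W̄*_{l,m}` read off the
coordinates `Λ_j (Φ_l^H c)_j`, `j ≠ m`, so `W̄*_{l,m}` is a positive semidefinite matrix whose
kernel is the line through `v*_l^{(m)}`. For any positive semidefinite `W`, the functional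
calculus shows `(I + t W)⁻¹ → P`, the orthogonal projection onto `ker W`; here
`P (H_ll^H u*_l^{(m)}) = Λ_{l,m} v*_l^{(m)}`, which normalizes to `v*_l^{(m)}`.
-/

open Topology

section EuclNorm

variable {M : ℕ}

lemma euclNorm_eq_norm_toLp (v : Fin M → ℂ) :
    euclNorm v = ‖(WithLp.toLp 2 v : EuclideanSpace ℂ (Fin M))‖ := by
  rw [EuclideanSpace.norm_eq]
  rfl

lemma continuous_euclNorm : Continuous (euclNorm (M := M)) := by
  simp only [funext euclNorm_eq_norm_toLp]
  exact continuous_norm.comp (PiLp.continuous_toLp 2 _)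

lemma euclNorm_smul (c : ℂ) (v : Fin M → ℂ) : euclNorm (c • v) = ‖c‖ * euclNorm v := by
  rw [euclNorm_eq_norm_toLp, euclNorm_eq_norm_toLp, WithLp.toLp_smul, norm_smul]

lemma euclNorm_eq_one_of_star_dotProduct_self {v : Fin M → ℂ} (hv : star v ⬝ᵥ v = 1) :
    euclNorm v = 1 := by
  have h := inner_self_eq_norm_sq_to_K (𝕜 := ℂ)
    (WithLp.toLp 2 v : EuclideanSpace ℂ (Fin M))
  rw [EuclideanSpace.inner_eq_star_dotProduct, dotProduct_comm, hv, ← euclNorm_eq_norm_toLp,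
    ← RCLike.ofReal_pow, eq_comm, ← RCLike.ofReal_one, RCLike.ofReal_inj] at h
  exact (pow_eq_one_iff_of_nonneg (Real.sqrt_nonneg _) two_ne_zero).mp h

lemma tendsto_euclNorm_inv_smul_of_tendsto_ofReal_smul {α : Type*} {l : Filter α}
    {f : α → Fin M → ℂ} {v : Fin M → ℂ} {r : ℝ} (hf : Tendsto f l (𝓝 ((r : ℂ) • v)))
    (hr : 0 < r) (hv : euclNorm v = 1) :
    Tendsto (fun a => (euclNorm (f a))⁻¹ • f a) l (𝓝 v) := by
  have hnorm : euclNorm ((r : ℂ) • v) = r := by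
    rw [euclNorm_smul, hv, mul_one, Complex.norm_real, Real.norm_of_nonneg hr.le]
  have h := ((continuous_euclNorm.tendsto _).comp hf).inv₀ (hnorm.trans_ne hr.ne') |>.smul hf
  rwa [hnorm, ← Complex.coe_smul, smul_smul, ← Complex.ofReal_mul, inv_mul_cancel₀ hr.ne',
    Complex.ofReal_one, one_smul] at h

end EuclNorm

namespace Matrix

variable {𝕜 : Type*} [RCLike 𝕜] {n p ι : Type*} [Fintype n] [Fintype p]

lemma PosSemidef.add_mulVec_eq_zero_iff {A B : Matrix n n 𝕜} (hA : A.PosSemidef)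
    (hB : B.PosSemidef) (x : n → 𝕜) :
    (A + B) *ᵥ x = 0 ↔ A *ᵥ x = 0 ∧ B *ᵥ x = 0 := by
  rw [← (hA.add hB).dotProduct_mulVec_zero_iff, ← hA.dotProduct_mulVec_zero_iff,
    ← hB.dotProduct_mulVec_zero_iff, add_mulVec, dotProduct_add]
  exact add_eq_zero_iff_of_nonneg (hA.dotProduct_mulVec_nonneg x)
    (hB.dotProduct_mulVec_nonneg x)

lemma PosSemidef.sum_mulVec_eq_zero_iff {s : Finset ι} {A : ι → Matrix n n 𝕜}
    (hA : ∀ i ∈ s, (A i).PosSemidef) (x : n → 𝕜) :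
    (∑ i ∈ s, A i) *ᵥ x = 0 ↔ ∀ i ∈ s, A i *ᵥ x = 0 := by
  rw [← (posSemidef_sum s hA).dotProduct_mulVec_zero_iff, sum_mulVec, dotProduct_sum,
    Finset.sum_eq_zero_iff_of_nonneg fun i hi => (hA i hi).dotProduct_mulVec_nonneg x]
  exact forall₂_congr fun i hi => (hA i hi).dotProduct_mulVec_zero_iff x

lemma vecMulVec_star_mulVec_eq_zero_iff (r x : n → 𝕜) :
    vecMulVec r (star r) *ᵥ x = 0 ↔ star r ⬝ᵥ x = 0 := by
  rw [vecMulVec_mulVec, op_smul_eq_smul, smul_eq_zero, or_iff_left_iff_imp]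
  rintro rfl
  simp

lemma ker_mulVecLin_eq_range_of_mul_eq_zero [DecidableEq p] {Z : Matrix n n 𝕜}
    {V : Matrix n p 𝕜} (hZV : Z * V = 0) (hV : Vᴴ * V = 1)
    (hrank : Z.rank + Fintype.card p = Fintype.card n) :
    LinearMap.ker Z.mulVecLin = LinearMap.range V.mulVecLin := by
  have hle : LinearMap.range V.mulVecLin ≤ LinearMap.ker Z.mulVecLin := by
    rintro _ ⟨c, rfl⟩
    simp [mulVec_mulVec, hZV]
  have hV_rank : V.rank = Fintype.card p := by
    rw [← rank_conjTranspose_mul_self, hV, rank_one]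
  have hZ_ker : Module.finrank 𝕜 (LinearMap.ker Z.mulVecLin) = Fintype.card p := by
    have := LinearMap.finrank_range_add_finrank_ker Z.mulVecLin
    rw [Module.finrank_fintype_fun_eq_card] at this
    unfold rank at hrank
    omega
  exact (Submodule.eq_of_le_of_finrank_le hle (hZ_ker.trans hV_rank.symm).le).symm

lemma conjTranspose_mulVec_col [DecidableEq p] {Φ : Matrix p p 𝕜} (hΦ : Φᴴ * Φ = 1)
    (m : p) : Φᴴ *ᵥ Φ.col m = Pi.single m 1 := by
  rw [← mulVec_single_one, mulVec_mulVec, hΦ, one_mulVec]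

lemma eq_smul_col_of_conjTranspose_mulVec_eq_zero [DecidableEq p] {Φ : Matrix p p 𝕜}
    (hΦ : Φᴴ * Φ = 1) {m : p} {c : p → 𝕜} (hc : ∀ j ≠ m, (Φᴴ *ᵥ c) j = 0) :
    c = (Φᴴ *ᵥ c) m • Φ.col m := by
  have hsingle : Φᴴ *ᵥ c = (Φᴴ *ᵥ c) m • Pi.single m 1 := by
    ext j
    by_cases hj : j = m
    · subst hj; simp
    · simp [hj, hc j hj]
  calc c = Φ *ᵥ (Φᴴ *ᵥ c) := by rw [mulVec_mulVec, mul_eq_one_comm.mp hΦ, one_mulVec]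
    _ = (Φᴴ *ᵥ c) m • Φ.col m := by nth_rw 1 [hsingle]; rw [mulVec_smul, mulVec_single_one]

theorem ker_add_sum_vecMulVec_eq_span [DecidableEq p] {Z : Matrix n n 𝕜} {V : Matrix n p 𝕜}
    {Φ : Matrix p p 𝕜} {r : p → n → 𝕜} {σ : p → 𝕜} (m : p)
    (hZ : Z.PosSemidef) (hZV : Z * V = 0) (hV : Vᴴ * V = 1)
    (hrank : Z.rank + Fintype.card p = Fintype.card n) (hΦ : Φᴴ * Φ = 1) (hσ : ∀ j, σ j ≠ 0)
    (hr : ∀ j c, star (r j) ⬝ᵥ (V *ᵥ c) = σ j * (Φᴴ *ᵥ c) j) :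
    LinearMap.ker (Z + ∑ j ∈ Finset.univ.filter (· ≠ m),
        vecMulVec (r j) (star (r j))).mulVecLin = Submodule.span 𝕜 {V *ᵥ Φ.col m} := by
  ext x
  rw [LinearMap.mem_ker, mulVecLin_apply, hZ.add_mulVec_eq_zero_iff
      (posSemidef_sum _ fun j _ => posSemidef_vecMulVec_self_star (r j)),
    PosSemidef.sum_mulVec_eq_zero_iff fun j _ => posSemidef_vecMulVec_self_star (r j),
    ← mulVecLin_apply, ← LinearMap.mem_ker, ker_mulVecLin_eq_range_of_mul_eq_zero hZV hV hrank,
    Submodule.mem_span_singleton]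
  simp only [vecMulVec_star_mulVec_eq_zero_iff, Finset.mem_filter, Finset.mem_univ, true_and]
  constructor
  · rintro ⟨⟨c, rfl⟩, hx⟩
    have hc : ∀ j ≠ m, (Φᴴ *ᵥ c) j = 0 := fun j hj =>
      (mul_eq_zero.mp ((hr j c).symm.trans (hx j hj))).resolve_left (hσ j)
    refine ⟨(Φᴴ *ᵥ c) m, ?_⟩
    rw [mulVecLin_apply, ← mulVec_smul, ← eq_smul_col_of_conjTranspose_mulVec_eq_zero hΦ hc]
  · rintro ⟨a, rfl⟩
    refine ⟨⟨a • Φ.col m, by rw [mulVecLin_apply, mulVec_smul]⟩, fun j hj => ?_⟩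
    rw [← mulVec_smul, hr, mulVec_smul, conjTranspose_mulVec_col hΦ]
    simp [hj]

end Matrix

namespace Matrix.IsHermitian

variable {𝕜 n : Type*} [RCLike 𝕜] [Fintype n] [DecidableEq n] {A : Matrix n n 𝕜}
  (hA : A.IsHermitian)

lemma cfc_congr {f g : ℝ → ℝ} (h : ∀ i, f (hA.eigenvalues i) = g (hA.eigenvalues i)) :
    hA.cfc f = hA.cfc g := by
  unfold IsHermitian.cfc
  congr 2
  exact funext fun i => congrArg RCLike.ofReal (h i)

lemma cfc_add (f g : ℝ → ℝ) : hA.cfc (f + g) = hA.cfc f + hA.cfc g := by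
  rw [IsHermitian.cfc, IsHermitian.cfc, IsHermitian.cfc, ← map_add, diagonal_add]
  congr 2
  ext i
  simp

lemma cfc_mul (f g : ℝ → ℝ) : hA.cfc (f * g) = hA.cfc f * hA.cfc g := by
  rw [IsHermitian.cfc, IsHermitian.cfc, IsHermitian.cfc, ← map_mul, diagonal_mul_diagonal]
  congr 2
  ext i
  simp

lemma cfc_smul (c : ℝ) (f : ℝ → ℝ) : hA.cfc (c • f) = (c : 𝕜) • hA.cfc f := by
  rw [IsHermitian.cfc, IsHermitian.cfc, ← map_smul, ← diagonal_smul]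
  congr 2
  ext i
  simp

lemma cfc_one : hA.cfc 1 = 1 := by
  rw [IsHermitian.cfc, ← map_one (Unitary.conjStarAlgAut 𝕜 _ hA.eigenvectorUnitary),
    ← diagonal_one]
  congr 2
  ext i
  simp

lemma cfc_zero : hA.cfc 0 = 0 := by
  simp [IsHermitian.cfc]

lemma cfc_id : hA.cfc id = A := by
  conv_rhs => rw [hA.spectral_theorem]
  rfl

lemma conjTranspose_cfc (f : ℝ → ℝ) : (hA.cfc f)ᴴ = hA.cfc f := by
  rw [← star_eq_conjTranspose, IsHermitian.cfc, ← map_star, star_eq_conjTranspose,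
    diagonal_conjTranspose]
  congr 2
  ext i
  simp

lemma cfc_one_add_mul (t : ℝ) : hA.cfc (fun x => 1 + t * x) = 1 + (t : 𝕜) • A := by
  have h : (fun x : ℝ => 1 + t * x) = 1 + t • id := rfl
  rw [h, cfc_add, cfc_one, cfc_smul, cfc_id]

lemma inv_one_add_smul_eq_cfc {t : ℝ} (ht : ∀ i, 1 + t * hA.eigenvalues i ≠ 0) :
    (1 + (t : 𝕜) • A)⁻¹ = hA.cfc (fun x => (1 + t * x)⁻¹) := by
  refine inv_eq_left_inv ?_
  rw [← hA.cfc_one_add_mul, ← hA.cfc_mul, ← hA.cfc_one]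
  exact hA.cfc_congr fun i => inv_mul_cancel₀ (ht i)

lemma tendsto_cfc {ι : Type*} {l : Filter ι} {f : ι → ℝ → ℝ} {g : ℝ → ℝ}
    (h : ∀ i, Tendsto (fun a => f a (hA.eigenvalues i)) l (𝓝 (g (hA.eigenvalues i)))) :
    Tendsto (fun a => hA.cfc (f a)) l (𝓝 (hA.cfc g)) := by
  have hdiag : Tendsto (fun a => RCLike.ofReal ∘ f a ∘ hA.eigenvalues) l
      (𝓝 (RCLike.ofReal ∘ g ∘ hA.eigenvalues)) :=
    tendsto_pi_nhds.mpr fun i => ((RCLike.continuous_ofReal (K := 𝕜)).tendsto _).comp (h i)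
  exact ((continuous_const.matrix_mul continuous_id).matrix_mul continuous_const).tendsto _
    |>.comp ((continuous_id (X := n → 𝕜)).matrix_diagonal.tendsto _ |>.comp hdiag)

lemma mul_cfc_ite_eq_zero : A * hA.cfc (fun x => if x = 0 then 1 else 0) = 0 := by
  calc A * hA.cfc (fun x => if x = 0 then 1 else 0)
      = hA.cfc (id * fun x => if x = 0 then 1 else 0) := by rw [hA.cfc_mul, hA.cfc_id]
    _ = hA.cfc 0 := congrArg hA.cfc (funext fun x => by by_cases hx : x = 0 <;> simp [hx])
    _ = 0 := hA.cfc_zero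

lemma cfc_ite_mulVec_of_mulVec_eq_zero {y : n → 𝕜} (hy : A *ᵥ y = 0) :
    hA.cfc (fun x => if x = 0 then 1 else 0) *ᵥ y = y := by
  have hsplit : hA.cfc (fun x => if x = 0 then 1 else 0)
      + hA.cfc (fun x => if x = 0 then 0 else x⁻¹) * A = 1 := calc
    _ = hA.cfc ((fun x => if x = 0 then 1 else 0)
          + (fun x => if x = 0 then 0 else x⁻¹) * id) := by
      rw [hA.cfc_add, hA.cfc_mul, hA.cfc_id]
    _ = hA.cfc 1 := congrArg hA.cfc (funext fun x => by by_cases hx : x = 0 <;> simp [hx])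
    _ = 1 := hA.cfc_one
  calc hA.cfc (fun x => if x = 0 then 1 else 0) *ᵥ y
      = (hA.cfc (fun x => if x = 0 then 1 else 0)
          + hA.cfc (fun x => if x = 0 then 0 else x⁻¹) * A) *ᵥ y := by
        rw [add_mulVec, ← mulVec_mulVec, hy, mulVec_zero, add_zero]
    _ = y := by rw [hsplit, one_mulVec]

end Matrix.IsHermitian

lemma Real.tendsto_inv_one_add_mul_atTop {a : ℝ} (ha : 0 ≤ a) :
    Tendsto (fun t : ℝ => (1 + t * a)⁻¹) atTop (𝓝 (if a = 0 then 1 else 0)) := by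
  rcases ha.eq_or_lt with rfl | ha
  · simp
  · rw [if_neg ha.ne']
    exact (tendsto_atTop_add_const_left _ 1 (tendsto_id.atTop_mul_const ha)).inv_tendsto_atTop

namespace Matrix.PosSemidef

variable {𝕜 n : Type*} [RCLike 𝕜] [Fintype n] [DecidableEq n] {A : Matrix n n 𝕜}

lemma tendsto_inv_one_add_smul (hA : A.PosSemidef) :
    Tendsto (fun t : ℝ => (1 + (t : 𝕜) • A)⁻¹) atTop
      (𝓝 (hA.isHermitian.cfc (fun x => if x = 0 then 1 else 0))) := by
  refine (hA.isHermitian.tendsto_cfc (f := fun t x => (1 + t * x)⁻¹) fun i =>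
    Real.tendsto_inv_one_add_mul_atTop (hA.eigenvalues_nonneg i)).congr' ?_
  filter_upwards [eventually_ge_atTop 0] with t ht
  exact (hA.isHermitian.inv_one_add_smul_eq_cfc fun i =>
    (add_pos_of_pos_of_nonneg one_pos (mul_nonneg ht (hA.eigenvalues_nonneg i))).ne').symm

theorem tendsto_inv_one_add_smul_mulVec_of_ker_eq_span (hA : A.PosSemidef) {v : n → 𝕜}
    (hker : LinearMap.ker A.mulVecLin = Submodule.span 𝕜 {v}) (hv : star v ⬝ᵥ v = 1)
    (b : n → 𝕜) :
    Tendsto (fun t : ℝ => (1 + (t : 𝕜) • A)⁻¹ *ᵥ b) atTop (𝓝 ((star v ⬝ᵥ b) • v)) := by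
  set P := hA.isHermitian.cfc (fun x => if x = 0 then 1 else 0)
  have hPb : P *ᵥ b ∈ Submodule.span 𝕜 {v} := by
    rw [← hker, LinearMap.mem_ker, mulVecLin_apply, mulVec_mulVec,
      hA.isHermitian.mul_cfc_ite_eq_zero, zero_mulVec]
  obtain ⟨γ, hγ⟩ := Submodule.mem_span_singleton.mp hPb
  have hPv : P *ᵥ v = v := by
    refine hA.isHermitian.cfc_ite_mulVec_of_mulVec_eq_zero ?_
    rw [← mulVecLin_apply, ← LinearMap.mem_ker, hker]
    exact Submodule.mem_span_singleton_self v
  have hγb : γ = star v ⬝ᵥ b := calc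
    γ = star v ⬝ᵥ (γ • v) := by rw [dotProduct_smul, hv, smul_eq_mul, mul_one]
    _ = star (P *ᵥ v) ⬝ᵥ b := by
      rw [hγ, dotProduct_mulVec, star_mulVec, hA.isHermitian.conjTranspose_cfc]
    _ = star v ⬝ᵥ b := by rw [hPv]
  rw [← hγb, hγ]
  exact ((continuous_id.matrix_mulVec continuous_const).tendsto P).comp
    hA.tendsto_inv_one_add_smul

end Matrix.PosSemidef

section Leakage

variable {𝕜 ι m n p q : Type*} [RCLike 𝕜] [Fintype m] [Fintype p]

lemma conjTranspose_mul_mul_conjTranspose_mul (B : Matrix m n 𝕜) (U : Matrix m p 𝕜) :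
    Bᴴ * U * Uᴴ * B = (Uᴴ * B)ᴴ * (Uᴴ * B) := by
  simp only [conjTranspose_mul, conjTranspose_conjTranspose, Matrix.mul_assoc]

lemma posSemidef_sum_conjTranspose_mul_mul_conjTranspose_mul [Fintype n] (s : Finset ι)
    (B : ι → Matrix m n 𝕜) (U : ι → Matrix m p 𝕜) :
    (∑ k ∈ s, (B k)ᴴ * U k * (U k)ᴴ * B k).PosSemidef :=
  posSemidef_sum s fun k _ => conjTranspose_mul_mul_conjTranspose_mul (B k) (U k) ▸
    posSemidef_conjTranspose_mul_self _

lemma sum_conjTranspose_mul_mul_conjTranspose_mul_mul_eq_zero [Fintype n] {s : Finset ι}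
    {B : ι → Matrix m n 𝕜} {U : ι → Matrix m p 𝕜} {V : Matrix n q 𝕜}
    (h : ∀ k ∈ s, (U k)ᴴ * B k * V = 0) :
    (∑ k ∈ s, (B k)ᴴ * U k * (U k)ᴴ * B k) * V = 0 := by
  rw [Matrix.sum_mul]
  refine Finset.sum_eq_zero fun k hk => ?_
  rw [conjTranspose_mul_mul_conjTranspose_mul, Matrix.mul_assoc, h k hk, Matrix.mul_zero]

end Leakage

lemma star_mulVec_col_dotProduct_mulVec {𝕜 m n p q : Type*} [RCLike 𝕜] [Fintype m]
    [Fintype n] [Fintype q]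
    (A : Matrix m n 𝕜) (U : Matrix m p 𝕜) (V : Matrix n q 𝕜) (j : p) (c : q → 𝕜) :
    star (Aᴴ *ᵥ U.col j) ⬝ᵥ (V *ᵥ c) = ((Uᴴ * A * V) *ᵥ c) j := by
  rw [star_mulVec, conjTranspose_conjTranspose, ← dotProduct_mulVec, ← mulVec_mulVec,
    ← mulVec_mulVec]
  simp [dotProduct, mulVec, conjTranspose_apply]

lemma star_mulVec_dotProduct_mulVec {𝕜 n p : Type*} [RCLike 𝕜] [Fintype n] [Fintype p]
    [DecidableEq p] {V : Matrix n p 𝕜} (hV : Vᴴ * V = 1) (x y : p → 𝕜) :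
    star (V *ᵥ x) ⬝ᵥ (V *ᵥ y) = star x ⬝ᵥ y := by
  rw [star_mulVec, ← dotProduct_mulVec, mulVec_mulVec, hV, one_mulVec]

theorem two_layer_optimal_is_maxSINR_fixed_point_transmit_general
    {K d : ℕ}
    (H : Fin K → Fin K → Matrix (Fin (2 * d)) (Fin (2 * d)) ℂ)
    (Vu Uu : Fin K → Matrix (Fin (2 * d)) (Fin d) ℂ)
    (hVuOrth : ∀ k, (Vu k)ᴴ * Vu k = 1)
    (hIA : ∀ k l : Fin K, l ≠ k → (Uu k)ᴴ * H k l * Vu l = 0)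
    (Θ Φ : Fin K → Matrix (Fin d) (Fin d) ℂ) (Λ : Fin K → Fin d → ℝ)
    (hΘ : ∀ k, (Θ k)ᴴ * Θ k = 1) (hΦ : ∀ k, (Φ k)ᴴ * Φ k = 1)
    (hΛ : ∀ k j, 0 < Λ k j)
    (hSVD : ∀ k, (Uu k)ᴴ * H k k * Vu k
        = Θ k * Matrix.diagonal (fun j => (Λ k j : ℂ)) * (Φ k)ᴴ)
    (Ust : Fin K → Matrix (Fin (2 * d)) (Fin d) ℂ)
    (hUst : ∀ k, Ust k = Uu k * Θ k)
    (l : Fin K)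
    (ust : Fin d → (Fin (2 * d) → ℂ)) (hust : ∀ m, ust m = fun i => Ust l i m)
    (vst : Fin d → (Fin (2 * d) → ℂ))
    (hvst : ∀ m, vst m = (Vu l).mulVec (fun i => Φ l i m))
    (Zst : Matrix (Fin (2 * d)) (Fin (2 * d)) ℂ)
    (hZst : Zst = ∑ k ∈ Finset.univ.filter (· ≠ l),
        (H k l)ᴴ * Ust k * (Ust k)ᴴ * H k l)
    (hZrank : Zst.rank = d)
    (Wst : Fin d → Matrix (Fin (2 * d)) (Fin (2 * d)) ℂ)
    (hWst : ∀ m, Wst m = Zst + ∑ j ∈ Finset.univ.filter (· ≠ m),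
        vecMulVec ((H l l)ᴴ.mulVec (ust j)) (star ((H l l)ᴴ.mulVec (ust j)))) :
    ∀ m : Fin d,
      LinearMap.ker (Wst m).mulVecLin = Submodule.span ℂ {vst m} ∧
      Tendsto
        (fun t : ℝ =>
          (euclNorm ((1 + (t : ℂ) • Wst m)⁻¹.mulVec ((H l l)ᴴ.mulVec (ust m))))⁻¹ •
            ((1 + (t : ℂ) • Wst m)⁻¹.mulVec ((H l l)ᴴ.mulVec (ust m))))
        atTop (nhds (vst m)) := by
  intro m
  have hrot : ∀ k k', (Ust k)ᴴ * H k k' * Vu k' = (Θ k)ᴴ * ((Uu k)ᴴ * H k k' * Vu k') :=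
    fun k k' => by simp only [hUst, conjTranspose_mul, Matrix.mul_assoc]
  have hleak : ∀ k ∈ Finset.univ.filter (· ≠ l), (Ust k)ᴴ * H k l * Vu l = 0 := fun k hk => by
    rw [hrot, hIA k l (Finset.mem_filter.mp hk).2.symm, Matrix.mul_zero]
  have hZ : Zst.PosSemidef :=
    hZst ▸ posSemidef_sum_conjTranspose_mul_mul_conjTranspose_mul _ _ _
  have hZV : Zst * Vu l = 0 :=
    hZst ▸ sum_conjTranspose_mul_mul_conjTranspose_mul_mul_eq_zero hleak
  have hsvd : (Ust l)ᴴ * H l l * Vu l = diagonal (fun j => (Λ l j : ℂ)) * (Φ l)ᴴ := by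
    rw [hrot, hSVD, ← Matrix.mul_assoc, ← Matrix.mul_assoc, hΘ, Matrix.one_mul]
  have hr : ∀ j c, star ((H l l)ᴴ *ᵥ ust j) ⬝ᵥ (Vu l *ᵥ c) = (Λ l j : ℂ) * ((Φ l)ᴴ *ᵥ c) j :=
    fun j c => by
      rw [show ust j = (Ust l).col j from hust j, star_mulVec_col_dotProduct_mulVec, hsvd,
        ← mulVec_mulVec, mulVec_diagonal]
  have hv_col : vst m = Vu l *ᵥ (Φ l).col m := hvst m
  have hker : LinearMap.ker (Wst m).mulVecLin = Submodule.span ℂ {vst m} := by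
    rw [hWst, hv_col]
    refine ker_add_sum_vecMulVec_eq_span m hZ hZV (hVuOrth l) (by simp [hZrank]; omega) (hΦ l)
      (fun j => Complex.ofReal_ne_zero.mpr (hΛ l j).ne') hr
  have hv : star (vst m) ⬝ᵥ vst m = 1 := by
    rw [hv_col, star_mulVec_dotProduct_mulVec (hVuOrth l), ← mulVec_single_one,
      star_mulVec_dotProduct_mulVec (hΦ l)]
    simp
  have hvb : star (vst m) ⬝ᵥ (H l l)ᴴ *ᵥ ust m = (Λ l m : ℂ) := by
    rw [star_dotProduct, hv_col, hr, conjTranspose_mulVec_col (hΦ l)]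
    simp
  have hW : (Wst m).PosSemidef := hWst m ▸ hZ.add
    (posSemidef_sum _ fun j _ => posSemidef_vecMulVec_self_star _)
  have hlim := hW.tendsto_inv_one_add_smul_mulVec_of_ker_eq_span hker hv ((H l l)ᴴ *ᵥ ust m)
  rw [hvb] at hlim
  exact ⟨hker, tendsto_euclNorm_inv_smul_of_tendsto_ofReal_smul hlim (hΛ l m)
    (euclNorm_eq_one_of_star_dotProduct_self hv)⟩

/-- Theorem 2, transmit side: the two-layer optimal beamformer is fixed by the high-SNR
max-SINR update in the reciprocal channel: `ker W̄*_{l,m} = span{v*_l^{(m)}}` and the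
normalized reciprocal max-SINR filter converges, as `t → ∞`, exactly to `v*_l^{(m)}`. -/
theorem two_layer_optimal_is_maxSINR_fixed_point_transmit
    {K d : ℕ}
    (H : Fin K → Fin K → Matrix (Fin (2 * d)) (Fin (2 * d)) ℂ)
    (Vu Uu : Fin K → Matrix (Fin (2 * d)) (Fin d) ℂ)
    (hVuOrth : ∀ k, (Vu k)ᴴ * Vu k = 1) (hUuOrth : ∀ k, (Uu k)ᴴ * Uu k = 1)
    (hIA : ∀ k l : Fin K, l ≠ k → (Uu k)ᴴ * H k l * Vu l = 0)
    (Θ Φ : Fin K → Matrix (Fin d) (Fin d) ℂ) (Λ : Fin K → Fin d → ℝ)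
    (hΘ : ∀ k, (Θ k)ᴴ * Θ k = 1) (hΦ : ∀ k, (Φ k)ᴴ * Φ k = 1)
    (hΛ : ∀ k j, 0 < Λ k j)
    (hSVD : ∀ k, (Uu k)ᴴ * H k k * Vu k
        = Θ k * Matrix.diagonal (fun j => (Λ k j : ℂ)) * (Φ k)ᴴ)
    (Ust : Fin K → Matrix (Fin (2 * d)) (Fin d) ℂ)
    (hUst : ∀ k, Ust k = Uu k * Θ k)
    (l : Fin K)
    (ust : Fin d → (Fin (2 * d) → ℂ)) (hust : ∀ m, ust m = fun i => Ust l i m)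
    (vst : Fin d → (Fin (2 * d) → ℂ))
    (hvst : ∀ m, vst m = (Vu l).mulVec (fun i => Φ l i m))
    (Zst : Matrix (Fin (2 * d)) (Fin (2 * d)) ℂ)
    (hZst : Zst = ∑ k ∈ Finset.univ.filter (· ≠ l),
        (H k l)ᴴ * Ust k * (Ust k)ᴴ * H k l)
    (hZrank : Zst.rank = d)
    (Wst : Fin d → Matrix (Fin (2 * d)) (Fin (2 * d)) ℂ)
    (hWst : ∀ m, Wst m = Zst + ∑ j ∈ Finset.univ.filter (· ≠ m),
        vecMulVec ((H l l)ᴴ.mulVec (ust j)) (star ((H l l)ᴴ.mulVec (ust j)))) :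
    ∀ m : Fin d,
      LinearMap.ker (Wst m).mulVecLin = Submodule.span ℂ {vst m} ∧
      Tendsto
        (fun t : ℝ =>
          (euclNorm ((1 + (t : ℂ) • Wst m)⁻¹.mulVec ((H l l)ᴴ.mulVec (ust m))))⁻¹ •
            ((1 + (t : ℂ) • Wst m)⁻¹.mulVec ((H l l)ᴴ.mulVec (ust m))))
        atTop (nhds (vst m)) :=
  two_layer_optimal_is_maxSINR_fixed_point_transmit_general H Vu Uu hVuOrth hIA Θ Φ Λ hΘ hΦ hΛ hSVD
    Ust hUst l ust hust vst hvst Zst hZst hZrank Wst hWst
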